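/- Fix γ ≥ 1 and v₂ ∈ (v_min, 0) with v_min = -ℓ(0⁺). For θ₁ ∈ (0, θ^cr), let ρ₁ = ρ₁(θ₁) ∈ (0,1) be determined by ℓ(ρ₁) cos θ₁ = -v₂. Then the squared pseudo-Mach number of state (2) at the reflection point, M₂(θ₁)² = (ℓ(ρ₁)/(1-ρ₁))² (ρ₁² + cot² θ₁), is a strictly decreasing function of θ₁ ∈ (0, θ^cr), and M₂(θ₁) → ∞ as θ₁ → 0⁺. -/

import Mathlib

open Set Filter

/-- Polytropic enthalpy: `h(ρ) = (ρ^(γ-1) - 1)/(γ-1)` for `γ > 1`, `log ρ` for `γ = 1`. -/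
noncomputable def enthalpy (γ ρ : ℝ) : ℝ :=
  if γ = 1 then Real.log ρ else (ρ ^ (γ - 1) - 1) / (γ - 1)

/-- `ℓ(ρ₁, ρ₂) = sqrt(2(ρ₁-ρ₂)(h(ρ₁)-h(ρ₂))/(ρ₁+ρ₂))`; here we use `ℓ(ρ) = ℓ(ρ,1)`. -/
noncomputable def ell (γ ρ₁ ρ₂ : ℝ) : ℝ :=
  Real.sqrt (2 * (ρ₁ - ρ₂) * (enthalpy γ ρ₁ - enthalpy γ ρ₂) / (ρ₁ + ρ₂))

/-!
Since `ℓ` is decreasing in `ρ` and `cos` in `θ₁`, the compatibility condition `ℓ(ρ₁) cos θ₁ = -v₂`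
forces `ρ₁` to decrease as `θ₁` increases. Using it once more,
`M₂² = (ℓ(ρ₁) ρ₁ / (1 - ρ₁))² + (v₂ / ((1 - ρ₁) sin θ₁))²`.
The second term is strictly decreasing in `θ₁`. The first equals `2 (ψ(ρ₁²) - ψ(1)) / (ρ₁² - 1)` for
`ψ(t) = t h(√t)`, which is convex when `γ ≥ 1`; as a secant slope of `ψ` it is nondecreasing in
`ρ₁`, hence nonincreasing in `θ₁`. Finally `M₂ ≥ ℓ(ρ₁) cot θ₁ = -v₂ / sin θ₁ ≥ -v₂ / θ₁`.
-/

open Real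

lemma enthalpy_one (γ : ℝ) : enthalpy γ 1 = 0 := by
  unfold enthalpy; split_ifs <;> simp

lemma enthalpy_strictMonoOn (γ : ℝ) : StrictMonoOn (enthalpy γ) (Ioi 0) := by
  intro a ha b _ hab
  unfold enthalpy
  split_ifs with h
  · exact log_lt_log ha hab
  rcases lt_or_gt_of_ne (sub_ne_zero.2 h) with hg | hg
  · exact (div_lt_div_right_of_neg hg).2 (by linarith [rpow_lt_rpow_of_neg ha hab hg])
  · exact div_lt_div_of_pos_right (by linarith [rpow_lt_rpow ha.le hab hg]) hg

lemma enthalpy_neg {γ ρ : ℝ} (hρ : ρ ∈ Ioo 0 1) : enthalpy γ ρ < 0 :=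
  enthalpy_one γ ▸ enthalpy_strictMonoOn γ hρ.1 (mem_Ioi.2 one_pos) hρ.2

lemma ell_eq_sqrt (γ ρ : ℝ) : ell γ ρ 1 = √(2 * (1 - ρ) * -enthalpy γ ρ / (1 + ρ)) := by
  rw [ell, enthalpy_one]; ring_nf

lemma ell_radicand_pos {γ ρ : ℝ} (hρ : ρ ∈ Ioo 0 1) :
    0 < 2 * (1 - ρ) * -enthalpy γ ρ / (1 + ρ) := by
  have := enthalpy_neg (γ := γ) hρ
  exact div_pos (by nlinarith [hρ.2]) (by linarith [hρ.1])

lemma sq_ell {γ ρ : ℝ} (hρ : ρ ∈ Ioo 0 1) :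
    ell γ ρ 1 ^ 2 = 2 * (1 - ρ) * -enthalpy γ ρ / (1 + ρ) := by
  rw [ell_eq_sqrt, sq_sqrt (ell_radicand_pos hρ).le]

lemma ell_pos {γ ρ : ℝ} (hρ : ρ ∈ Ioo 0 1) : 0 < ell γ ρ 1 := by
  rw [ell_eq_sqrt]
  exact sqrt_pos.2 (ell_radicand_pos hρ)

lemma ell_strictAntiOn (γ : ℝ) : StrictAntiOn (fun ρ => ell γ ρ 1) (Ioo 0 1) := by
  intro a ha b hb hab
  have hha := enthalpy_neg (γ := γ) ha
  have hh := enthalpy_strictMonoOn γ ha.1 hb.1 hab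
  simp only [ell_eq_sqrt]
  apply sqrt_lt_sqrt (ell_radicand_pos hb).le
  calc 2 * (1 - b) * -enthalpy γ b / (1 + b)
      < 2 * (1 - a) * -enthalpy γ a / (1 + b) :=
        div_lt_div_of_pos_right (by nlinarith [hb.2]) (by linarith [hb.1])
    _ ≤ 2 * (1 - a) * -enthalpy γ a / (1 + a) := by
        gcongr
        · nlinarith [ha.2]
        · linarith [ha.1]

lemma convexOn_mul_enthalpy_sqrt {γ : ℝ} (hγ : 1 ≤ γ) :
    ConvexOn ℝ (Ioi 0) (fun t => t * enthalpy γ √t) := by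
  rcases hγ.eq_or_lt with rfl | hγ
  · refine ((convexOn_mul_log.subset Ioi_subset_Ici_self (convex_Ioi 0)).smul
      (by norm_num : (0:ℝ) ≤ 1 / 2)).congr fun t ht => ?_
    simp only [enthalpy, if_true, log_sqrt ht.le, smul_eq_mul]
    ring
  · have hp : 1 ≤ (γ + 1) / 2 := by linarith
    refine ((((convexOn_rpow hp).subset Ioi_subset_Ici_self (convex_Ioi 0)).sub
      (concaveOn_id (convex_Ioi 0))).smul (inv_nonneg.2 (sub_pos.2 hγ).le)).congr
      fun t (ht : 0 < t) => ?_
    have hpow : t ^ ((γ + 1) / 2) = t * √t ^ (γ - 1) := by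
      rw [sqrt_eq_rpow, ← rpow_mul ht.le, ← rpow_one_add' ht.le (by linarith)]
      ring_nf
    simp only [enthalpy, if_neg hγ.ne', smul_eq_mul, Pi.sub_apply, id, hpow]
    field_simp

lemma monotoneOn_sq_ell_mul_div {γ : ℝ} (hγ : 1 ≤ γ) :
    MonotoneOn (fun ρ => (ell γ ρ 1 * ρ / (1 - ρ)) ^ 2) (Ioo 0 1) := by
  set ψ : ℝ → ℝ := fun t => t * enthalpy γ √t
  have slope : ∀ ρ ∈ Ioo (0:ℝ) 1,
      (ell γ ρ 1 * ρ / (1 - ρ)) ^ 2 = 2 * ((ψ (ρ ^ 2) - ψ 1) / (ρ ^ 2 - 1)) := by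
    intro ρ hρ
    have h1 : 1 - ρ ≠ 0 := by linarith [hρ.2]
    have h2 : 1 + ρ ≠ 0 := by linarith [hρ.1]
    have h3 : ρ ^ 2 - 1 ≠ 0 := by nlinarith [hρ.1, hρ.2]
    simp only [ψ, sqrt_one, enthalpy_one, sqrt_sq hρ.1.le, div_pow, mul_pow, sq_ell hρ]
    field_simp
    ring
  intro a ha b hb hab
  simp only [slope a ha, slope b hb]
  gcongr 2 * ?_
  refine (convexOn_mul_enthalpy_sqrt hγ).secant_mono (mem_Ioi.2 one_pos) (sq_pos_of_pos ha.1)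
    (sq_pos_of_pos hb.1) ?_ ?_ (pow_le_pow_left₀ ha.1.le hab 2)
  · nlinarith [ha.1, ha.2]
  · nlinarith [hb.1, hb.2]

lemma sq_ell_div_mul_lt {γ v₂ ρ ρ' c c' s s' : ℝ} (hγ : 1 ≤ γ) (hv : v₂ < 0)
    (hρ : ρ ∈ Ioo 0 1) (hρ' : ρ' ∈ Ioo 0 1) (hρρ' : ρ' < ρ) (hs : 0 < s) (hss' : s < s')
    (hcomp : ell γ ρ 1 * c = -v₂) (hcomp' : ell γ ρ' 1 * c' = -v₂) :
    (ell γ ρ' 1 / (1 - ρ')) ^ 2 * (ρ' ^ 2 + (c' / s') ^ 2)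
      < (ell γ ρ 1 / (1 - ρ)) ^ 2 * (ρ ^ 2 + (c / s) ^ 2) := by
  have split : ∀ L ρ c s : ℝ, (L / (1 - ρ)) ^ 2 * (ρ ^ 2 + (c / s) ^ 2)
      = (L * ρ / (1 - ρ)) ^ 2 + (L * c / (1 - ρ) / s) ^ 2 := fun _ _ _ _ => by ring
  simp only [split, hcomp, hcomp', div_div]
  have hden : 0 < (1 - ρ) * s := mul_pos (by linarith [hρ.2]) hs
  have hden' : (1 - ρ) * s < (1 - ρ') * s' :=
    mul_lt_mul'' (by linarith) hss' (by linarith [hρ.2]) hs.le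
  exact add_lt_add_of_le_of_lt (monotoneOn_sq_ell_mul_div hγ hρ' hρ hρρ'.le)
    (pow_lt_pow_left₀ (div_lt_div_of_pos_left (neg_pos.2 hv) hden hden')
      (div_nonneg (neg_pos.2 hv).le (hden.trans hden').le) two_ne_zero)

lemma rho_strictAntiOn {γ v₂ θcr : ℝ} {ρ₁ : ℝ → ℝ} (hθcr : θcr ≤ π / 2)
    (hρ₁ : ∀ θ ∈ Ioo 0 θcr, ρ₁ θ ∈ Ioo (0 : ℝ) 1 ∧ ell γ (ρ₁ θ) 1 * cos θ = -v₂) :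
    StrictAntiOn ρ₁ (Ioo 0 θcr) := by
  intro θ hθ θ' hθ' hlt
  obtain ⟨hρ, hcomp⟩ := hρ₁ θ hθ
  obtain ⟨hρ', hcomp'⟩ := hρ₁ θ' hθ'
  have hc' : 0 < cos θ' := cos_pos_of_mem_Ioo ⟨by linarith [pi_pos, hθ'.1], by linarith [hθ'.2]⟩
  have hcc' : cos θ' < cos θ := strictAntiOn_cos
    ⟨hθ.1.le, by linarith [pi_pos, hθ.2]⟩ ⟨hθ'.1.le, by linarith [pi_pos, hθ'.2]⟩ hlt
  by_contra! hle
  have hℓ : ell γ (ρ₁ θ') 1 ≤ ell γ (ρ₁ θ) 1 := (ell_strictAntiOn γ).antitoneOn hρ hρ' hle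
  have := calc -v₂ = ell γ (ρ₁ θ') 1 * cos θ' := hcomp'.symm
    _ ≤ ell γ (ρ₁ θ) 1 * cos θ' := mul_le_mul_of_nonneg_right hℓ hc'.le
    _ < ell γ (ρ₁ θ) 1 * cos θ := mul_lt_mul_of_pos_left hcc' (ell_pos hρ)
    _ = -v₂ := hcomp
  exact lt_irrefl _ this

lemma neg_mul_inv_le_ell_div_mul_sqrt {γ v₂ θ ρ : ℝ} (hv : v₂ < 0) (hθ : θ ∈ Ioo 0 (π / 2))
    (hρ : ρ ∈ Ioo 0 1) (hcomp : ell γ ρ 1 * cos θ = -v₂) :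
    -v₂ * θ⁻¹ ≤ ell γ ρ 1 / (1 - ρ) * √(ρ ^ 2 + (cos θ / sin θ) ^ 2) := by
  have hs : 0 < sin θ := sin_pos_of_pos_of_lt_pi hθ.1 (by linarith [pi_pos, hθ.2])
  have hcot : 0 ≤ cos θ / sin θ :=
    div_nonneg (cos_pos_of_mem_Ioo ⟨by linarith [pi_pos, hθ.1], hθ.2⟩).le hs.le
  calc -v₂ * θ⁻¹ ≤ -v₂ / sin θ :=
        div_le_div_of_nonneg_left (neg_pos.2 hv).le hs (sin_le hθ.1.le)
    _ = ell γ ρ 1 * (cos θ / sin θ) := by rw [← hcomp]; ring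
    _ ≤ ell γ ρ 1 / (1 - ρ) * √(ρ ^ 2 + (cos θ / sin θ) ^ 2) := by
        refine mul_le_mul ?_ ?_ hcot (div_nonneg (ell_pos hρ).le (by linarith [hρ.2]))
        · exact le_div_self (ell_pos hρ).le (by linarith [hρ.2]) (by linarith [hρ.1])
        · exact (le_sqrt hcot (by positivity)).2 (by nlinarith)

theorem machNumber_strictAnti_and_tendsto_atTop_general
    (γ v₂ θcr : ℝ) (hγ : 1 ≤ γ) (hv : v₂ < 0)
    (hθcr₁ : θcr ≤ Real.pi / 2)
    (ρ₁ : ℝ → ℝ)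
    (hρ₁ : ∀ θ ∈ Set.Ioo 0 θcr,
      ρ₁ θ ∈ Set.Ioo (0 : ℝ) 1 ∧ ell γ (ρ₁ θ) 1 * Real.cos θ = -v₂) :
    StrictAntiOn
      (fun θ => (ell γ (ρ₁ θ) 1 / (1 - ρ₁ θ)) ^ 2 *
        ((ρ₁ θ) ^ 2 + (Real.cos θ / Real.sin θ) ^ 2))
      (Set.Ioo 0 θcr) ∧
    Filter.Tendsto
      (fun θ => (ell γ (ρ₁ θ) 1 / (1 - ρ₁ θ)) *
        Real.sqrt ((ρ₁ θ) ^ 2 + (Real.cos θ / Real.sin θ) ^ 2))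
      (nhdsWithin 0 (Set.Ioo 0 θcr)) Filter.atTop := by
  have hsub : Ioo 0 θcr ⊆ Ioo 0 (π / 2) := Ioo_subset_Ioo_right hθcr₁
  refine ⟨fun θ hθ θ' hθ' hlt => ?_, ?_⟩
  · have hs : 0 < sin θ := sin_pos_of_pos_of_lt_pi hθ.1 (by linarith [pi_pos, (hsub hθ).2])
    have hss' : sin θ < sin θ' := strictMonoOn_sin ⟨by linarith [pi_pos, hθ.1], (hsub hθ).2.le⟩
      ⟨by linarith [pi_pos, hθ'.1], (hsub hθ').2.le⟩ hlt
    exact sq_ell_div_mul_lt hγ hv (hρ₁ θ hθ).1 (hρ₁ θ' hθ').1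
      (rho_strictAntiOn hθcr₁ hρ₁ hθ hθ' hlt) hs hss' (hρ₁ θ hθ).2 (hρ₁ θ' hθ').2
  · have hinv : Tendsto (fun θ => -v₂ * θ⁻¹) (nhdsWithin 0 (Ioo 0 θcr)) atTop :=
      (tendsto_inv_nhdsGT_zero.mono_left (nhdsWithin_mono _ Ioo_subset_Ioi_self)).const_mul_atTop
        (neg_pos.2 hv)
    refine tendsto_atTop_mono' _ (eventually_nhdsWithin_of_forall fun θ hθ => ?_) hinv
    exact neg_mul_inv_le_ell_div_mul_sqrt hv (hsub hθ) (hρ₁ θ hθ).1 (hρ₁ θ hθ).2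

/-- Fix `γ ≥ 1`, `v₂ ∈ (v_min, 0)`, and a critical angle `θ^cr ∈ (0, π/2]`.
For `θ₁ ∈ (0, θ^cr)`, let `ρ₁ = ρ₁(θ₁) ∈ (0,1)` be determined by the compatibility
condition `ℓ(ρ₁) cos θ₁ = -v₂`. Then the squared pseudo-Mach number
`M₂(θ₁)² = (ℓ(ρ₁)/(1-ρ₁))²(ρ₁² + cot²θ₁)` is strictly decreasing on `(0, θ^cr)`,
and `M₂(θ₁) → ∞` as `θ₁ → 0⁺`. -/
theorem machNumber_strictAnti_and_tendsto_atTop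
    (γ v₂ θcr : ℝ) (hγ : 1 ≤ γ) (hv : v₂ < 0)
    (hθcr₀ : 0 < θcr) (hθcr₁ : θcr ≤ Real.pi / 2)
    (ρ₁ : ℝ → ℝ)
    (hρ₁ : ∀ θ ∈ Set.Ioo 0 θcr,
      ρ₁ θ ∈ Set.Ioo (0 : ℝ) 1 ∧ ell γ (ρ₁ θ) 1 * Real.cos θ = -v₂) :
    StrictAntiOn
      (fun θ => (ell γ (ρ₁ θ) 1 / (1 - ρ₁ θ)) ^ 2 *
        ((ρ₁ θ) ^ 2 + (Real.cos θ / Real.sin θ) ^ 2))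
      (Set.Ioo 0 θcr) ∧
    Filter.Tendsto
      (fun θ => (ell γ (ρ₁ θ) 1 / (1 - ρ₁ θ)) *
        Real.sqrt ((ρ₁ θ) ^ 2 + (Real.cos θ / Real.sin θ) ^ 2))
      (nhdsWithin 0 (Set.Ioo 0 θcr)) Filter.atTop :=
  machNumber_strictAnti_and_tendsto_atTop_general γ v₂ θcr hγ hv hθcr₁ ρ₁ hρ₁
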